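/- arXiv:2504.12564 — 5 statements merged into one kernel-verified Lean document; each statement's English description precedes it below -/
import Mathlib

section
/- Let p < q be distinct primes and let ℓ = p^{u₁}·q^{u₂} with u₁, u₂ ≥ 1. Set d = ℓ/(pq). Let h be an integer with 1 ≤ h ≤ ℓ, p-adic valuation v_p(h) = u₁ − a₁ with a₁ ≥ 2. Consider the p integers h, h + ℓ/p, h + 2ℓ/p, …, h + (p−1)ℓ/p reduced modulo ℓ to representatives in {1, …, ℓ}. Then for any two distinct such representatives h' and h'', their residues modulo ℓ/q lie in distinct congruence classes modulo d when reduced to the interval (ℓ − ℓ/p − ℓ/q, ℓ − ℓ/p]; in particular, exactly one representative h₁ among them has its reduced residue in the subinterval (ℓ − ℓ/p − ℓ/q, ℓ − ℓ/p − ℓ/q + d). -/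
/-! Write `ℓ = p q D` with `D = p^(u₁-1) q^(u₂-1) = d`, so that `ℓ₁ = qD` and `ℓ₂ = pD`, and every
number `b ≡ h + k ℓ₁ (mod ℓ₂)` is `≡ h (mod D)`. A block `(z + jD, z + (j+1)D]` contains exactly one
number of each class mod `D`, so if two of the `p` representatives fall into the same block they
coincide, and then `k q D ≡ k' q D (mod pD)` forces `k = k'` because `p` and `q` are coprime. Hence
the `p` representatives occupy the `p` blocks of `(z, z + ℓ₂]` injectively, so one lies in the
first block `(z, z + D]`; it is not `z + D`, because `D ∣ z` while `D ∤ h` as `v_p(h) < u₁ - 1`. -/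

theorem Nat.exists_modEq_mem_Ioc (z x : ℕ) {m : ℕ} (hm : 0 < m) :
    ∃ b, z < b ∧ b ≤ z + m ∧ b ≡ x [MOD m] := by
  have hx : z + 1 ≤ x + m * (z + 1) :=
    (Nat.le_mul_of_pos_left (z + 1) hm).trans (Nat.le_add_left _ _)
  refine ⟨z + 1 + (x + m * (z + 1) - (z + 1)) % m, by omega,
    by have := Nat.mod_lt (x + m * (z + 1) - (z + 1)) hm; omega, ?_⟩
  calc z + 1 + (x + m * (z + 1) - (z + 1)) % m
      ≡ z + 1 + (x + m * (z + 1) - (z + 1)) [MOD m] := (Nat.mod_modEq _ _).add_left _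
    _ = x + m * (z + 1) := by omega
    _ ≡ x [MOD m] := Nat.add_mul_mod_self_left x m (z + 1)

section Blocks

variable {p q D h z : ℕ}

theorem modEq_of_modEq_add_mul {b k : ℕ} (hb : b ≡ h + k * (q * D) [MOD p * D]) :
    b ≡ h [MOD D] :=
  calc b ≡ h + k * (q * D) [MOD D] := hb.of_mul_left p
    _ ≡ h + 0 [MOD D] :=
      .add_left h (Nat.modEq_zero_iff_dvd.mpr (Dvd.intro_left _ (mul_assoc k q D)))

theorem eq_of_add_mul_modEq_add_mul (hpq : p.Coprime q) (hD : 0 < D) {k k' : ℕ}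
    (hk : k < p) (hk' : k' < p) (hmod : h + k * (q * D) ≡ h + k' * (q * D) [MOD p * D]) :
    k = k' := by
  have hkq : k * q ≡ k' * q [MOD p] := by
    refine Nat.ModEq.mul_right_cancel' hD.ne' ?_
    simpa only [mul_assoc] using Nat.ModEq.add_left_cancel' _ hmod
  exact (Nat.ModEq.cancel_right_of_coprime hpq hkq).eq_of_lt_of_lt hk hk'

theorem eq_of_block_eq (hpq : p.Coprime q) (hD : 0 < D) {k k' b b' : ℕ}
    (hk : k < p) (hk' : k' < p) (hzb : z < b) (hzb' : z < b')
    (hb : b ≡ h + k * (q * D) [MOD p * D]) (hb' : b' ≡ h + k' * (q * D) [MOD p * D])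
    (hblock : (b - (z + 1)) / D = (b' - (z + 1)) / D) : k = k' := by
  have hmod : b - (z + 1) ≡ b' - (z + 1) [MOD D] := by
    refine Nat.ModEq.add_left_cancel' (z + 1) ?_
    rw [Nat.add_sub_cancel' hzb, Nat.add_sub_cancel' hzb']
    exact (modEq_of_modEq_add_mul hb).trans (modEq_of_modEq_add_mul hb').symm
  have hbb' : b = b' := by
    have := Nat.ext_div_modEq hblock hmod
    omega
  subst hbb'
  exact eq_of_add_mul_modEq_add_mul hpq hD hk hk' (hb.symm.trans hb')

theorem exists_modEq_mem_first_block (hpq : p.Coprime q) (hD : 0 < D) (hp : 0 < p) :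
    ∃ k < p, ∃ b, z < b ∧ b ≤ z + D ∧ b ≡ h + k * (q * D) [MOD p * D] := by
  choose b hzb hbz hb using
    fun k : ℕ ↦ Nat.exists_modEq_mem_Ioc z (h + k * (q * D)) (mul_pos hp hD)
  have hblock_lt (k : ℕ) : (b k - (z + 1)) / D < p :=
    Nat.div_lt_of_lt_mul (by have := hzb k; have := hbz k; rw [mul_comm]; omega)
  let block : Fin p → Fin p := fun k ↦ ⟨(b k - (z + 1)) / D, hblock_lt k⟩
  have hinj : block.Injective := fun k k' hkk' ↦ Fin.ext <|
    eq_of_block_eq hpq hD k.isLt k'.isLt (hzb k) (hzb k') (hb k) (hb k') (Fin.val_eq_of_eq hkk')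
  obtain ⟨k, hk⟩ := Finite.surjective_of_injective hinj ⟨0, hp⟩
  have hk0 : (b k - (z + 1)) / D = 0 := Fin.val_eq_of_eq hk
  rw [Nat.div_eq_zero_iff] at hk0
  exact ⟨k, k.isLt, b k, hzb k, by omega, hb k⟩

theorem ne_add_of_modEq_of_not_dvd (hz : D ∣ z) (hh : ¬ D ∣ h) {b : ℕ} (hb : b ≡ h [MOD D]) :
    b ≠ z + D := by
  rintro rfl
  exact hh <| Nat.modEq_zero_iff_dvd.mp <|
    hb.symm.trans (Nat.modEq_zero_iff_dvd.mpr (dvd_add hz dvd_rfl))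

end Blocks

theorem unique_representative_in_first_block_general
    (p q u₁ u₂ a₁ h ℓ ℓ₁ ℓ₂ d z : ℕ)
    (hp : p.Prime) (hq : q.Prime) (hpq : p < q)
    (hu₂ : 1 ≤ u₂) (ha₁ : 2 ≤ a₁) (ha₁u : a₁ ≤ u₁)
    (hℓ : ℓ = p ^ u₁ * q ^ u₂) (hℓ₁ : ℓ₁ = ℓ / p) (hℓ₂ : ℓ₂ = ℓ / q)
    (hd : d = ℓ / (p * q)) (hz : z = ℓ - ℓ₁ - ℓ₂)
    (hh1 : 1 ≤ h) (hv : h.factorization p = u₁ - a₁) :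
    (∀ k k' b b' : ℕ, k < p → k' < p → k ≠ k' →
      z < b → b ≤ z + ℓ₂ → b ≡ h + k * ℓ₁ [MOD ℓ₂] →
      z < b' → b' ≤ z + ℓ₂ → b' ≡ h + k' * ℓ₁ [MOD ℓ₂] →
      (b - (z + 1)) / d ≠ (b' - (z + 1)) / d) ∧
    (∃! k : ℕ, k < p ∧ ∃ b : ℕ, z < b ∧ b < z + d ∧ b ≡ h + k * ℓ₁ [MOD ℓ₂]) := by
  obtain ⟨u, rfl⟩ : ∃ u, u₁ = u + 1 := ⟨u₁ - 1, by omega⟩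
  obtain ⟨v, rfl⟩ : ∃ v, u₂ = v + 1 := ⟨u₂ - 1, by omega⟩
  set D := p ^ u * q ^ v
  have hD : 0 < D := mul_pos (pow_pos hp.pos _) (pow_pos hq.pos _)
  have hℓD : ℓ = p * q * D := by rw [hℓ]; ring
  obtain rfl : ℓ₁ = q * D := by rw [hℓ₁, hℓD, mul_assoc, Nat.mul_div_cancel_left _ hp.pos]
  obtain rfl : ℓ₂ = p * D := by rw [hℓ₂, hℓD, mul_right_comm, Nat.mul_div_cancel _ hq.pos]
  obtain rfl : d = D := by rw [hd, hℓD, Nat.mul_div_cancel_left _ (mul_pos hp.pos hq.pos)]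
  have hcop : p.Coprime q := (Nat.coprime_primes hp hq).mpr hpq.ne
  have hDz : D ∣ z := hz ▸ Nat.dvd_sub (Nat.dvd_sub (hℓD ▸ dvd_mul_left _ _) (dvd_mul_left _ _))
    (dvd_mul_left _ _)
  have hDh : ¬ D ∣ h := fun hDh ↦ by
    have := (hp.pow_dvd_iff_le_factorization (by omega)).mp ((dvd_mul_right _ _).trans hDh)
    omega
  obtain ⟨k, hk, b, hzb, hbD, hb⟩ := exists_modEq_mem_first_block (z := z) (h := h) hcop hD hp.pos
  have hb_lt : b < z + D :=
    lt_of_le_of_ne hbD (ne_add_of_modEq_of_not_dvd hDz hDh (modEq_of_modEq_add_mul hb))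
  refine ⟨fun k k' b b' hk hk' hkk' hzb _ hb hzb' _ hb' hblock ↦
    hkk' (eq_of_block_eq hcop hD hk hk' hzb hzb' hb hb' hblock), k, ⟨hk, b, hzb, hb_lt, hb⟩, ?_⟩
  rintro k' ⟨hk', b', hzb', hb'_lt, hb'⟩
  refine eq_of_block_eq hcop hD hk' hk hzb' hzb hb' hb ?_
  rw [Nat.div_eq_of_lt (by omega), Nat.div_eq_of_lt (by omega)]

/-- Let ℓ = p^{u₁}q^{u₂}, ℓ₁ = ℓ/p, ℓ₂ = ℓ/q, d = ℓ/(pq), z = ℓ − ℓ₁ − ℓ₂, and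
    h with v_p(h) = u₁ − a₁, a₁ ≥ 2.  The reduced residues modulo ℓ₂ (in (z, z+ℓ₂])
    of the p numbers h + k·ℓ₁ lie in pairwise distinct subintervals of length d;
    in particular exactly one of them has its residue in (z, z + d). -/
theorem unique_representative_in_first_block
    (p q u₁ u₂ a₁ h ℓ ℓ₁ ℓ₂ d z : ℕ)
    (hp : p.Prime) (hq : q.Prime) (hpq : p < q)
    (hu₁ : 1 ≤ u₁) (hu₂ : 1 ≤ u₂) (ha₁ : 2 ≤ a₁) (ha₁u : a₁ ≤ u₁)
    (hℓ : ℓ = p ^ u₁ * q ^ u₂) (hℓ₁ : ℓ₁ = ℓ / p) (hℓ₂ : ℓ₂ = ℓ / q)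
    (hd : d = ℓ / (p * q)) (hz : z = ℓ - ℓ₁ - ℓ₂)
    (hh1 : 1 ≤ h) (hh2 : h ≤ ℓ) (hv : h.factorization p = u₁ - a₁) :
    (∀ k k' b b' : ℕ, k < p → k' < p → k ≠ k' →
      z < b → b ≤ z + ℓ₂ → b ≡ h + k * ℓ₁ [MOD ℓ₂] →
      z < b' → b' ≤ z + ℓ₂ → b' ≡ h + k' * ℓ₁ [MOD ℓ₂] →
      (b - (z + 1)) / d ≠ (b' - (z + 1)) / d) ∧
    (∃! k : ℕ, k < p ∧ ∃ b : ℕ, z < b ∧ b < z + d ∧ b ≡ h + k * ℓ₁ [MOD ℓ₂]) :=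
  unique_representative_in_first_block_general p q u₁ u₂ a₁ h ℓ ℓ₁ ℓ₂ d z hp hq hpq hu₂ ha₁ ha₁u hℓ
    hℓ₁ hℓ₂ hd hz hh1 hv
end

section
/- Let p be a prime and t ≥ 1 an integer. For any integer h with 1 ≤ h ≤ p^t, gcd(h, p) = 1, and h ≤ p^{t−1}(p−1) − 1 (equivalently h < p^t − p^{t−1}), there exists an integer k with 1 ≤ k ≤ p − 1 and gcd(1 + p^{t−1}k, p) = 1 such that the remainder of (1 + p^{t−1}k)·h modulo p^t is at least p^{t−1}(p−1). -/
/-- Any h coprime to p with h < p^{t−1}(p−1) can be pushed into the top segment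
    [p^{t−1}(p−1), p^t) by multiplication with a unit 1 + p^{t−1}k. -/
theorem exists_unit_push_to_top (p t h : ℕ) (hp : p.Prime) (ht : 1 ≤ t)
    (hh1 : 1 ≤ h) (hh2 : h ≤ p ^ t) (hcop : Nat.Coprime h p)
    (hh3 : h ≤ p ^ (t - 1) * (p - 1) - 1) :
    ∃ k : ℕ, 1 ≤ k ∧ k ≤ p - 1 ∧ Nat.Coprime (1 + p ^ (t - 1) * k) p ∧
      p ^ (t - 1) * (p - 1) ≤ ((1 + p ^ (t - 1) * k) * h) % p ^ t := by
  haveI : Fact p.Prime := ⟨hp⟩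
  have hp2 : 2 ≤ p := hp.two_le
  set P := p ^ (t - 1) with hP
  have hPpos : 0 < P := pow_pos hp.pos _
  set q := h / P with hq
  set r := h % P with hr
  have hdm : P * q + r = h := Nat.div_add_mod h P
  have hrlt : r < P := Nat.mod_lt _ hPpos
  have hpdvd : ¬ p ∣ h := hp.coprime_iff_not_dvd.mp hcop.symm
  have hhlt0 : h < P * (p - 1) := by
    have hPp : 1 ≤ P * (p - 1) := Nat.mul_pos hPpos (by omega)
    omega
  have hqlt : q < p - 1 := by
    rw [hq, Nat.div_lt_iff_lt_mul hPpos]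
    rwa [mul_comm] at hhlt0
  clear_value q r
  clear hq hr
  -- h is nonzero mod p
  have hhne : (h : ZMod p) ≠ 0 := by
    rw [Ne, ZMod.natCast_eq_zero_iff]
    exact hpdvd
  -- define k
  set x : ZMod p := (↑(p - 1 - q)) * (h : ZMod p)⁻¹ with hx
  set k : ℕ := x.val with hk
  have hkcast : (k : ZMod p) = x := by rw [hk, ZMod.natCast_val, ZMod.cast_id]
  have hklt : k < p := ZMod.val_lt x
  clear_value k
  clear hk
  have hxne : x ≠ 0 := by
    apply mul_ne_zero
    · rw [Ne, ZMod.natCast_eq_zero_iff]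
      intro hdvd
      have h3 := Nat.le_of_dvd (show 0 < p - 1 - q by omega) hdvd
      omega
    · exact inv_ne_zero hhne
  have hkpos : 1 ≤ k := by
    rcases Nat.eq_zero_or_pos k with h0 | h0
    · exfalso; apply hxne
      have : (k : ZMod p) = 0 := by rw [h0]; exact Nat.cast_zero
      rwa [hkcast] at this
    · exact h0
  -- key congruence: (q + k*h) % p = p - 1
  have hkey : (q + k * h) % p = p - 1 := by
    have hz : ((q + k * h : ℕ) : ZMod p) = ((p - 1 : ℕ) : ZMod p) := by
      push_cast
      rw [hkcast, hx, mul_assoc, inv_mul_cancel₀ hhne, mul_one,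
        ← Nat.cast_add]
      congr 1
      omega
    have hmodeq := (ZMod.natCast_eq_natCast_iff _ _ _).mp hz
    unfold Nat.ModEq at hmodeq
    rw [hmodeq]
    exact Nat.mod_eq_of_lt (by omega)
  -- compute the remainder
  have hpt : p ^ t = P * p := by
    rw [hP, ← pow_succ]
    congr 1
    omega
  have e1 : P * (p - 1) + P = P * p := by
    have hpp : p - 1 + 1 = p := by omega
    calc P * (p - 1) + P = P * ((p - 1) + 1) := by ring
      _ = P * p := by rw [hpp]
  have hval : ((1 + P * k) * h) % p ^ t = r + P * (p - 1) := by
    have hexp : (1 + P * k) * h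
        = (r + P * ((q + k * h) % p)) + (P * p) * ((q + k * h) / p) := by
      have h1 : (1 + P * k) * h = r + P * (q + k * h) := by rw [← hdm]; ring
      rw [h1]
      conv_lhs => rw [← Nat.div_add_mod (q + k * h) p]
      ring
    rw [hpt, hexp, Nat.add_mul_mod_self_left, hkey]
    exact Nat.mod_eq_of_lt (by omega)
  refine ⟨k, hkpos, by omega, ?_, ?_⟩
  · -- coprimality
    rw [Nat.coprime_comm, hp.coprime_iff_not_dvd]
    intro hdvd
    have hdvd2 : p ∣ ((1 + P * k) * h) % p ^ t := by
      rw [Nat.dvd_mod_iff (dvd_pow_self p (by omega))]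
      exact hdvd.mul_right h
    rw [hval] at hdvd2
    rcases Nat.lt_or_ge t 2 with ht1 | ht2
    · -- t = 1 : P = 1, r = 0
      have ht1' : t = 1 := by omega
      have hP1 : P = 1 := by rw [hP, ht1']; simp
      have hr0 : r = 0 := by omega
      rw [hr0, hP1, one_mul] at hdvd2
      have := Nat.le_of_dvd (by omega) hdvd2
      omega
    · -- t ≥ 2 : p ∣ P, so p ∣ r, so p ∣ h, contradiction
      have hpP : p ∣ P := dvd_pow_self p (by omega)
      have hpr : p ∣ r := (Nat.dvd_add_right (hpP.mul_right _)).mp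
        (by rwa [add_comm] at hdvd2)
      have hph : p ∣ h := by
        rw [← hdm]; exact Dvd.dvd.add (hpP.mul_right q) hpr
      exact hpdvd hph
  · rw [hval]; omega
end

section
/- Let m'' ≥ 3 be an integer with at least two distinct odd prime divisors, and let a be an odd integer coprime to m''. Then ∏_{α ∈ S} (−1)^{⌊α·a/m''⌋} = 1, where S ⊂ {1, …, m''−1} is any set of representatives of (ℤ/m''ℤ)* modulo {±1}. -/
private lemma prodNegOneZpow (s : Finset ℕ) (g : ℕ → ℤ) :
    ∏ x ∈ s, (-1 : ℚ) ^ g x = (-1 : ℚ) ^ (∑ x ∈ s, g x) := by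
  induction s using Finset.cons_induction with
  | empty => simp
  | cons a s ha ih =>
      rw [Finset.prod_cons, Finset.sum_cons, zpow_add₀ (by norm_num : (-1:ℚ) ≠ 0), ih]

private lemma coprimeSub (m b : ℕ) (hb : b ≤ m) (hc : Nat.Coprime b m) :
    Nat.Coprime (m - b) m := by
  have h1 : IsCoprime (b : ℤ) (m : ℤ) := Nat.isCoprime_iff_coprime.mpr hc
  have h2 := (h1.neg_left).add_mul_left_left 1
  have h3 : (-(b:ℤ) + (m:ℤ) * 1) = ((m - b : ℕ) : ℤ) := by push_cast [hb]; ring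
  rw [h3] at h2
  exact Nat.isCoprime_iff_coprime.mp h2

private lemma eulerHalf (m : ℕ) (a : ℤ) (hmodd : Odd m)
    (p₁ p₂ : ℕ) (hp₁ : p₁.Prime) (hp₂ : p₂.Prime) (hne : p₁ ≠ p₂)
    (hd₁ : p₁ ∣ m) (hd₂ : p₂ ∣ m) (hm3 : 3 ≤ m)
    (hacop : IsCoprime a (m : ℤ)) :
    (m : ℤ) ∣ a ^ (m.totient / 2) - 1 := by
  have hm0 : m ≠ 0 := by omega
  obtain ⟨codd, hcodd⟩ := hmodd
  set e := m.factorization p₁ with he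
  set d₁ := p₁ ^ e with hd1def
  set d₂ := m / d₁ with hd2def
  have hmul : d₁ * d₂ = m := Nat.ordProj_mul_ordCompl_eq_self m p₁
  have hcop12 : Nat.Coprime d₁ d₂ := Nat.Coprime.pow_left _ (Nat.coprime_ordCompl hp₁ hm0)
  have hepos : 0 < e := hp₁.factorization_pos_of_dvd hm0 hd₁
  have hp₁3 : 3 ≤ p₁ := by
    rcases hp₁.two_le.lt_or_eq with h | h
    · omega
    · exfalso; obtain ⟨c, hc⟩ := hd₁; rw [← h] at hc; omega
  have hp₂3 : 3 ≤ p₂ := by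
    rcases hp₂.two_le.lt_or_eq with h | h
    · omega
    · exfalso; obtain ⟨c, hc⟩ := hd₂; rw [← h] at hc; omega
  have hd₁3 : 3 ≤ d₁ := le_trans hp₁3 (Nat.le_self_pow (by omega) _)
  have hp₂d₂ : p₂ ∣ d₂ := by
    have h := (Nat.Prime.dvd_mul hp₂).mp (hmul ▸ hd₂)
    rcases h with h | h
    · exfalso
      have h' : p₂ ∣ p₁ ^ e := h
      have := hp₂.dvd_of_dvd_pow h'
      exact hne ((Nat.prime_dvd_prime_iff_eq hp₂ hp₁).mp this).symm
    · exact h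
  have hd₂pos : 0 < d₂ := by
    rcases Nat.eq_zero_or_pos d₂ with h | h
    · exfalso; rw [h, mul_zero] at hmul; omega
    · exact h
  have hd₂3 : 3 ≤ d₂ := le_trans hp₂3 (Nat.le_of_dvd hd₂pos hp₂d₂)
  have hev₁ : Even d₁.totient := Nat.totient_even (by omega)
  have hev₂ : Even d₂.totient := Nat.totient_even (by omega)
  have htot : m.totient = d₁.totient * d₂.totient := by
    rw [← hmul, Nat.totient_mul hcop12]
  have key : ∀ d t : ℕ, d ∣ m → m.totient / 2 = d.totient * t →
      (d : ℤ) ∣ a ^ (m.totient / 2) - 1 := by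
    intro d t hdm hk
    have hcopd : IsCoprime a (d : ℤ) := by
      obtain ⟨c, hc⟩ := hdm
      have h1 : IsCoprime a ((d : ℤ) * (c : ℤ)) := by
        rw [← Nat.cast_mul, ← hc]; exact hacop
      exact h1.of_mul_right_left
    have hu : IsUnit ((a : ℤ) : ZMod d) := by
      have h2 := hcopd.map (Int.castRingHom (ZMod d))
      have h2' : IsCoprime ((a : ℤ) : ZMod d) 0 := by simpa using h2
      exact isCoprime_zero_right.mp h2'
    have h1 : ((a : ZMod d)) ^ d.totient = 1 := by
      have h3 := ZMod.pow_totient hu.unit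
      have h4 : ((hu.unit : (ZMod d)ˣ) : ZMod d) ^ d.totient = 1 := by
        rw [← Units.val_pow_eq_pow_val, h3, Units.val_one]
      rwa [IsUnit.unit_spec] at h4
    have h2 : ((a : ZMod d)) ^ (m.totient / 2) = 1 := by
      rw [hk, pow_mul, h1, one_pow]
    have h5 : (((a ^ (m.totient / 2) - 1 : ℤ)) : ZMod d) = 0 := by
      push_cast
      rw [h2]; ring
    exact_mod_cast (ZMod.intCast_zmod_eq_zero_iff_dvd _ d).mp h5
  obtain ⟨t₁, ht₁⟩ := hev₂
  obtain ⟨t₂, ht₂⟩ := hev₁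
  have k1 : m.totient / 2 = d₁.totient * t₁ := by
    rw [htot, ht₁]
    have : d₁.totient * (t₁ + t₁) = 2 * (d₁.totient * t₁) := by ring
    rw [this, Nat.mul_div_cancel_left _ (by norm_num : 0 < 2)]
  have k2 : m.totient / 2 = d₂.totient * t₂ := by
    rw [htot, ht₂]
    have : (t₂ + t₂) * d₂.totient = 2 * (d₂.totient * t₂) := by ring
    rw [this, Nat.mul_div_cancel_left _ (by norm_num : 0 < 2)]
  have hic : IsCoprime (d₁ : ℤ) (d₂ : ℤ) := Nat.isCoprime_iff_coprime.mpr hcop12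
  have := hic.mul_dvd (key d₁ t₁ ⟨d₂, hmul.symm⟩ k1) (key d₂ t₂ ⟨d₁, by rw [← hmul, mul_comm]⟩ k2)
  rwa [← Nat.cast_mul, hmul] at this

/-- For m'' odd with at least two distinct prime divisors and a odd coprime to m'',
    ∏_{α ∈ S} (−1)^{⌊αa/m''⌋} = 1 for any set S of representatives of
    (ℤ/m''ℤ)*/{±1} inside {1, …, m''−1}. -/
theorem prod_neg_one_pow_floor_eq_one
    (m'' : ℕ) (a : ℤ) (hm3 : 3 ≤ m'') (hmodd : Odd m'')
    (p₁ p₂ : ℕ) (hp₁ : p₁.Prime) (hp₂ : p₂.Prime) (hne : p₁ ≠ p₂)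
    (hd₁ : p₁ ∣ m'') (hd₂ : p₂ ∣ m'')
    (haodd : Odd a) (hacop : Int.gcd a (m'' : ℤ) = 1)
    (S : Finset ℕ) (hSsub : S ⊆ Finset.Icc 1 (m'' - 1))
    (hScop : ∀ α ∈ S, Nat.Coprime α m'')
    (hSrep : ∀ x ∈ Finset.Icc 1 (m'' - 1), Nat.Coprime x m'' →
      ∃! α, α ∈ S ∧ ((α : ZMod m'') = (x : ZMod m'') ∨ (α : ZMod m'') = -(x : ZMod m''))) :
    ∏ α ∈ S, ((-1 : ℚ) ^ ⌊((α : ℚ) * (a : ℚ)) / (m'' : ℚ)⌋) = 1 := by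
  classical
  have hm0 : m'' ≠ 0 := by omega
  haveI : NeZero m'' := ⟨hm0⟩
  haveI : Fact (1 < m'') := ⟨by omega⟩
  obtain ⟨modd, hmoddeq⟩ := hmodd
  have hcop : IsCoprime a (m'' : ℤ) := Int.isCoprime_iff_gcd_eq_one.mpr hacop
  have hau : IsUnit ((a : ℤ) : ZMod m'') := by
    have h2 := hcop.map (Int.castRingHom (ZMod m''))
    have h2' : IsCoprime ((a : ℤ) : ZMod m'') 0 := by simpa using h2
    exact isCoprime_zero_right.mp h2'
  set z : ℕ → ZMod m'' := fun α => (α : ZMod m'') * ((a : ℤ) : ZMod m'') with hzdef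
  have hzunit : ∀ α ∈ S, IsUnit (z α) := fun α hα =>
    ((ZMod.isUnit_iff_coprime α m'').mpr (hScop α hα)).mul hau
  have hSbd : ∀ α ∈ S, 1 ≤ α ∧ α ≤ m'' - 1 := by
    intro α hα
    have := hSsub hα
    rw [Finset.mem_Icc] at this
    exact this
  have hxmem : ∀ α ∈ S, (z α).val ∈ Finset.Icc 1 (m'' - 1) := by
    intro α hα
    have h1 : (z α).val < m'' := ZMod.val_lt _
    have h2 : (z α).val ≠ 0 := by
      intro h
      exact (hzunit α hα).ne_zero ((ZMod.val_eq_zero _).mp h)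
    rw [Finset.mem_Icc]; omega
  have hxcop : ∀ α ∈ S, Nat.Coprime (z α).val m'' := by
    intro α hα
    have h := ZMod.val_coe_unit_coprime (hzunit α hα).unit
    rwa [IsUnit.unit_spec] at h
  have hzcast : ∀ α, (((z α).val : ℕ) : ZMod m'') = z α := fun α => by
    simp [ZMod.natCast_val, ZMod.cast_id]
  have hex : ∀ α, α ∈ S → ∃! β, β ∈ S ∧
      ((β : ZMod m'') = (((z α).val : ℕ) : ZMod m'') ∨
        (β : ZMod m'') = -(((z α).val : ℕ) : ZMod m'')) :=
    fun α hα => hSrep _ (hxmem α hα) (hxcop α hα)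
  set f : ℕ → ℕ := fun α => if h : α ∈ S then Classical.choose (hex α h) else α with hfdef
  have hfeq : ∀ α (h : α ∈ S), f α = Classical.choose (hex α h) := by
    intro α h
    simp only [hfdef, dif_pos h]
  have hfspec : ∀ α, α ∈ S → f α ∈ S ∧
      ((f α : ZMod m'') = z α ∨ (f α : ZMod m'') = -z α) := by
    intro α h
    have hs := (Classical.choose_spec (hex α h)).1
    rw [hfeq α h]
    refine ⟨hs.1, ?_⟩
    rcases hs.2 with h' | h'
    · exact Or.inl (h'.trans (hzcast α))
    · exact Or.inr (h'.trans (congrArg Neg.neg (hzcast α)))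
  have hfuniq : ∀ α (h : α ∈ S) (y : ℕ), y ∈ S →
      ((y : ZMod m'') = z α ∨ (y : ZMod m'') = -z α) → y = f α := by
    intro α h y hy hyz
    have hs := Classical.choose_spec (hex α h)
    rw [hfeq α h]
    apply hs.2
    refine ⟨hy, ?_⟩
    rcases hyz with h' | h'
    · exact Or.inl (h'.trans (hzcast α).symm)
    · exact Or.inr (h'.trans (congrArg Neg.neg (hzcast α).symm))
  -- injectivity of f on S
  have hfinj : ∀ α ∈ S, ∀ β ∈ S, f α = f β → α = β := by
    intro α hα β hβ hfe
    have h1 := (hfspec α hα).2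
    have h2 := (hfspec β hβ).2
    rw [hfe] at h1
    have hzz : z α = z β ∨ z α = -z β := by
      rcases h1 with h1 | h1 <;> rcases h2 with h2 | h2
      · exact Or.inl (by rw [← h1, ← h2])
      · exact Or.inr (by rw [← h1, h2])
      · exact Or.inr (by rw [← h2, h1, neg_neg])
      · exact Or.inl (neg_injective (by rw [← h1, ← h2]))
    have hab : (α : ZMod m'') = (β : ZMod m'') ∨ (α : ZMod m'') = -(β : ZMod m'') := by
      rcases hzz with h | h
      · left; exact hau.mul_right_cancel h
      · right
        apply hau.mul_right_cancel
        rw [hzdef] at h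
        simp only [neg_mul] at h ⊢
        exact h
    obtain ⟨γ, hγ, hγu⟩ := hSrep β (hSsub hβ) (hScop β hβ)
    have e1 := hγu α ⟨hα, hab⟩
    have e2 := hγu β ⟨hβ, Or.inl rfl⟩
    rw [e1, e2]
  have hfmaps : ∀ α ∈ S, f α ∈ S := fun α h => (hfspec α h).1
  have himg : Finset.image f S = S := by
    apply Finset.eq_of_subset_of_card_le
    · intro b hb
      rw [Finset.mem_image] at hb
      obtain ⟨a', ha', rfl⟩ := hb
      exact hfmaps _ ha'
    · rw [Finset.card_image_of_injOn (fun x hx y hy => hfinj x hx y hy)]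
  -- sign function
  set sgn : ℕ → ℤ := fun α => if (f α : ZMod m'') = z α then 1 else -1 with hsgndef
  have hkey : ∀ α ∈ S, z α = ((sgn α : ℤ) : ZMod m'') * (f α : ZMod m'') := by
    intro α hα
    simp only [hsgndef]
    by_cases h : (f α : ZMod m'') = z α
    · rw [if_pos h, h]; push_cast; ring
    · have h2 := ((hfspec α hα).2).resolve_left h
      rw [if_neg h]
      rw [h2]; push_cast; ring
  -- totient = 2 * card S
  set T : Finset ℕ := (Finset.Icc 1 (m'' - 1)).filter (fun x => Nat.Coprime x m'') with hTdef
  have hTmem : ∀ x, x ∈ T ↔ (1 ≤ x ∧ x ≤ m'' - 1 ∧ Nat.Coprime x m'') := by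
    intro x
    rw [hTdef, Finset.mem_filter, Finset.mem_Icc]
    tauto
  have hTcard : T.card = m''.totient := by
    rw [Nat.totient_eq_card_coprime]
    congr 1
    ext x
    rw [hTmem, Finset.mem_filter, Finset.mem_range]
    constructor
    · intro ⟨h1, h2, h3⟩
      exact ⟨by omega, h3.symm⟩
    · intro ⟨h1, h2⟩
      have h3 : x ≠ 0 := by
        intro h
        rw [h] at h2
        rw [Nat.coprime_comm, Nat.coprime_zero_left] at h2
        omega
      exact ⟨by omega, by omega, h2.symm⟩
  have hg : ∀ x, x ∈ T → ∃! β, β ∈ S ∧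
      ((β : ZMod m'') = (x : ZMod m'') ∨ (β : ZMod m'') = -(x : ZMod m'')) := by
    intro x hx
    rw [hTmem] at hx
    exact hSrep x (Finset.mem_Icc.mpr ⟨hx.1, hx.2.1⟩) hx.2.2
  set g : ℕ → ℕ := fun x => if h : x ∈ T then Classical.choose (hg x h) else x with hgdef
  have hgeq : ∀ x (h : x ∈ T), g x = Classical.choose (hg x h) := by
    intro x h
    simp only [hgdef, dif_pos h]
  have hgspec : ∀ x (h : x ∈ T), g x ∈ S ∧
      ((g x : ZMod m'') = (x : ZMod m'') ∨ (g x : ZMod m'') = -(x : ZMod m'')) := by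
    intro x h
    have hs := (Classical.choose_spec (hg x h)).1
    rw [hgeq x h]
    exact hs
  have hguniq : ∀ x (h : x ∈ T) (y : ℕ), y ∈ S →
      ((y : ZMod m'') = (x : ZMod m'') ∨ (y : ZMod m'') = -(x : ZMod m'')) → y = g x := by
    intro x h y hy hyz
    have hs := Classical.choose_spec (hg x h)
    rw [hgeq x h]
    exact hs.2 y ⟨hy, hyz⟩
  -- nat cast injectivity on [0, m'')
  have hcastinj : ∀ x y : ℕ, x < m'' → y < m'' → (x : ZMod m'') = (y : ZMod m'') → x = y := by
    intro x y hx hy h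
    have := congrArg ZMod.val h
    rwa [ZMod.val_cast_of_lt hx, ZMod.val_cast_of_lt hy] at this
  have hfiber : ∀ β ∈ S, T.filter (fun x => g x = β) = {β, m'' - β} := by
    intro β hβ
    obtain ⟨hβ1, hβ2⟩ := hSbd β hβ
    have hβT : β ∈ T := (hTmem β).mpr ⟨hβ1, hβ2, hScop β hβ⟩
    have hmβT : m'' - β ∈ T := by
      rw [hTmem]
      refine ⟨by omega, by omega, ?_⟩
      exact coprimeSub m'' β (by omega) (hScop β hβ)
    have hcastmβ : ((m'' - β : ℕ) : ZMod m'') = -(β : ZMod m'') := by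
      rw [Nat.cast_sub (by omega), ZMod.natCast_self, zero_sub]
    ext x
    rw [Finset.mem_filter, Finset.mem_insert, Finset.mem_singleton]
    constructor
    · rintro ⟨hxT, hgx⟩
      have hs := (hgspec x hxT).2
      rw [hgx] at hs
      have hxbd := (hTmem x).mp hxT
      rcases hs with h | h
      · left; exact (hcastinj β x (by omega) (by omega) h).symm
      · right
        have hsum : ((β + x : ℕ) : ZMod m'') = 0 := by
          push_cast
          rw [h]; ring
        have hdvd : m'' ∣ β + x := (ZMod.natCast_eq_zero_iff _ _).mp hsum
        obtain ⟨c, hc⟩ := hdvd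
        have hβx : β + x < m'' * 2 := by omega
        rw [hc] at hβx
        have hc2 : c < 2 := lt_of_mul_lt_mul_left hβx (Nat.zero_le m'')
        have hc0 : c ≠ 0 := by rintro rfl; omega
        have hceq : c = 1 := by omega
        rw [hceq, mul_one] at hc
        omega
    · intro hx
      rcases hx with rfl | rfl
      · exact ⟨hβT, (hguniq x hβT x hβ (Or.inl rfl)).symm⟩
      · refine ⟨hmβT, (hguniq _ hmβT β hβ ?_).symm⟩
        right
        rw [hcastmβ, neg_neg]
  have hfibercard : ∀ β ∈ S, (T.filter (fun x => g x = β)).card = 2 := by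
    intro β hβ
    rw [hfiber β hβ]
    obtain ⟨hβ1, hβ2⟩ := hSbd β hβ
    have hne' : β ≠ m'' - β := by omega
    rw [Finset.card_insert_of_notMem (by simpa using hne'), Finset.card_singleton]
  have hgmaps : ∀ x ∈ T, g x ∈ S := fun x hx => (hgspec x hx).1
  have hcount : m''.totient = 2 * S.card := by
    rw [← hTcard, Finset.card_eq_sum_card_fiberwise hgmaps]
    rw [Finset.sum_congr rfl hfibercard, Finset.sum_const, smul_eq_mul, mul_comm]
  -- a ^ card S = 1 in ZMod m''
  have hcard : S.card = m''.totient / 2 := by omega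
  have hpow1 : ((a : ℤ) : ZMod m'') ^ S.card = 1 := by
    rw [hcard]
    have hd := eulerHalf m'' a ⟨modd, hmoddeq⟩ p₁ p₂ hp₁ hp₂ hne hd₁ hd₂ hm3 hcop
    have h0 : (((a ^ (m''.totient / 2) - 1 : ℤ)) : ZMod m'') = 0 :=
      (ZMod.intCast_zmod_eq_zero_iff_dvd _ _).mpr hd
    push_cast at h0
    linear_combination h0
  -- product identity in ZMod m''
  have hUnit : IsUnit (∏ α ∈ S, (α : ZMod m'')) := by
    have hc : Nat.Coprime (∏ α ∈ S, α) m'' := Nat.Coprime.prod_left (fun i hi => hScop i hi)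
    have := (ZMod.isUnit_iff_coprime _ m'').mpr hc
    rwa [Nat.cast_prod] at this
  have hprod1 : ∏ α ∈ S, z α = (∏ α ∈ S, (α : ZMod m'')) * ((a : ℤ) : ZMod m'') ^ S.card := by
    rw [hzdef, Finset.prod_mul_distrib, Finset.prod_const]
  have hprodf : ∏ α ∈ S, ((f α : ℕ) : ZMod m'') = ∏ α ∈ S, (α : ZMod m'') := by
    conv_rhs => rw [← himg]
    rw [Finset.prod_image hfinj]
  have hprod2 : ∏ α ∈ S, z α =
      ((∏ α ∈ S, sgn α : ℤ) : ZMod m'') * ∏ α ∈ S, (α : ZMod m'') := by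
    rw [Finset.prod_congr rfl hkey, Finset.prod_mul_distrib, hprodf]
    push_cast
    ring
  have heps1 : ((∏ α ∈ S, sgn α : ℤ) : ZMod m'') = 1 := by
    have h := hprod1.symm.trans hprod2
    rw [hpow1, mul_one] at h
    have h2 : (∏ α ∈ S, (α : ZMod m'')) * ((∏ α ∈ S, sgn α : ℤ) : ZMod m'') =
        (∏ α ∈ S, (α : ZMod m'')) * 1 := by
      rw [mul_one, mul_comm]
      exact h.symm
    exact hUnit.mul_left_cancel h2
  -- flip count n
  set n : ℕ := (S.filter (fun α => ¬ ((f α : ZMod m'') = z α))).card with hndef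
  have hepspow : (∏ α ∈ S, sgn α) = (-1 : ℤ) ^ n := by
    simp only [hsgndef]
    rw [Finset.prod_ite (fun _ => (1:ℤ)) (fun _ => (-1:ℤ)), Finset.prod_const,
      Finset.prod_const, one_pow, one_mul, hndef]
  have hneven : Even n := by
    by_contra hodd
    rw [Nat.not_even_iff_odd] at hodd
    rw [hepspow, hodd.neg_one_pow] at heps1
    have : (((-1 : ℤ)) : ZMod m'') = ((1 : ℤ) : ZMod m'') := by push_cast; push_cast at heps1; linear_combination heps1
    rw [ZMod.intCast_eq_intCast_iff] at this
    have hdvd := Int.ModEq.dvd this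
    norm_num at hdvd
    have : (m'' : ℤ) ≤ 2 := Int.le_of_dvd (by norm_num) hdvd
    omega
  -- now the parity of the floors
  set q : ℕ → ℤ := fun α => ((α : ℤ) * a) / (m'' : ℤ) with hqdef
  set r : ℕ → ℕ := fun α => (((α : ℤ) * a) % (m'' : ℤ)).toNat with hrdef
  have hrval : ∀ α, ((r α : ℕ) : ℤ) = ((α : ℤ) * a) % (m'' : ℤ) := by
    intro α
    rw [hrdef]
    exact Int.toNat_of_nonneg (Int.emod_nonneg _ (by exact_mod_cast hm0))
  have hrlt : ∀ α, r α < m'' := by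
    intro α
    have h := Int.emod_lt_of_pos ((α : ℤ) * a) (by exact_mod_cast Nat.pos_of_ne_zero hm0 : (0:ℤ) < m'')
    have := hrval α
    omega
  have hqr : ∀ α, (m'' : ℤ) * q α + (r α : ℤ) = (α : ℤ) * a := by
    intro α
    rw [hrval, hqdef]
    exact Int.mul_ediv_add_emod _ _
  have hrcast : ∀ α, ((r α : ℕ) : ZMod m'') = z α := by
    intro α
    have h := congrArg (fun t : ℤ => ((t : ℤ) : ZMod m'')) (hqr α)
    simp only [Int.cast_add, Int.cast_mul, Int.cast_natCast, ZMod.natCast_self,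
      zero_mul, zero_add] at h
    rw [hzdef]
    exact_mod_cast h
  have hfbd : ∀ α ∈ S, 1 ≤ f α ∧ f α ≤ m'' - 1 := fun α hα => hSbd (f α) (hfmaps α hα)
  have hrf : ∀ α ∈ S, (if (f α : ZMod m'') = z α then r α = f α else r α = m'' - f α) := by
    intro α hα
    obtain ⟨hf1, hf2⟩ := hfbd α hα
    by_cases h : (f α : ZMod m'') = z α
    · rw [if_pos h]
      exact hcastinj _ _ (hrlt α) (by omega) ((hrcast α).trans h.symm)
    · rw [if_neg h]
      have h2 := ((hfspec α hα).2).resolve_left h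
      have hcastmβ : ((m'' - f α : ℕ) : ZMod m'') = -((f α : ℕ) : ZMod m'') := by
        rw [Nat.cast_sub (by omega), ZMod.natCast_self, zero_sub]
      apply hcastinj _ _ (hrlt α) (by omega)
      rw [hrcast α, hcastmβ, h2, neg_neg]
  -- parity in ZMod 2
  have hm2 : ((m'' : ℕ) : ZMod 2) = 1 := by
    have : m'' % 2 = 1 := by omega
    rw [← ZMod.natCast_mod, this, Nat.cast_one]
  have ha2 : ((a : ℤ) : ZMod 2) = 1 := by
    obtain ⟨c, hc⟩ := haodd
    rw [hc]
    push_cast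
    rw [show (2 : ZMod 2) = 0 by decide]
    ring
  have hnegZ2 : ∀ y : ZMod 2, -y = y := by decide
  have hq2 : ∀ α ∈ S, ((q α : ℤ) : ZMod 2) = (α : ZMod 2) + ((r α : ℕ) : ZMod 2) := by
    intro α hα
    have h := congrArg (fun t : ℤ => ((t : ℤ) : ZMod 2)) (hqr α)
    push_cast at h
    rw [hm2] at h
    rw [ha2] at h
    have : ((q α : ℤ) : ZMod 2) = (α : ZMod 2) * 1 - ((r α : ℕ) : ZMod 2) := by
      linear_combination h
    rw [this, mul_one, sub_eq_add_neg, hnegZ2]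
  have hr2 : ∀ α ∈ S, ((r α : ℕ) : ZMod 2) =
      ((f α : ℕ) : ZMod 2) + (if (f α : ZMod m'') = z α then 0 else 1) := by
    intro α hα
    obtain ⟨hf1, hf2⟩ := hfbd α hα
    have h := hrf α hα
    by_cases hc : (f α : ZMod m'') = z α
    · rw [if_pos hc] at h ⊢
      rw [h, add_zero]
    · rw [if_neg hc] at h ⊢
      rw [h, Nat.cast_sub (by omega : f α ≤ m''), hm2]
      rw [sub_eq_add_neg, hnegZ2, add_comm]
  have hsumf : ∑ α ∈ S, ((f α : ℕ) : ZMod 2) = ∑ α ∈ S, ((α : ℕ) : ZMod 2) := by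
    conv_rhs => rw [← himg]
    rw [Finset.sum_image hfinj]
  have hsumind : ∑ α ∈ S, (if (f α : ZMod m'') = z α then (0 : ZMod 2) else 1) = (n : ZMod 2) := by
    rw [Finset.sum_ite (fun _ => (0 : ZMod 2)) (fun _ => (1 : ZMod 2)), Finset.sum_const,
      Finset.sum_const, smul_zero, zero_add, nsmul_eq_mul, mul_one, hndef]
  have hsumq : Even (∑ α ∈ S, q α) := by
    rw [even_iff_two_dvd]
    have h0 : ((∑ α ∈ S, q α : ℤ) : ZMod 2) = 0 := by
      push_cast
      rw [Finset.sum_congr rfl hq2, Finset.sum_add_distrib,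
        Finset.sum_congr rfl hr2, Finset.sum_add_distrib, hsumf, hsumind]
      have hneven2 : ((n : ℕ) : ZMod 2) = 0 := by
        obtain ⟨c, hc⟩ := hneven
        rw [hc]
        push_cast
        ring_nf
        rw [show (2 : ZMod 2) = 0 by decide]
        ring
      rw [hneven2, add_zero]
      have : ∀ y : ZMod 2, y + y = 0 := by decide
      exact this _
    exact_mod_cast (ZMod.intCast_zmod_eq_zero_iff_dvd _ 2).mp h0
  -- conclude
  have hfloor : ∀ α ∈ S, ⌊((α : ℚ) * (a : ℚ)) / (m'' : ℚ)⌋ = q α := by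
    intro α hα
    rw [hqdef]
    have h1 : ((α : ℚ) * (a : ℚ)) = (((α : ℤ) * a : ℤ) : ℚ) := by push_cast; ring
    rw [h1, Rat.floor_intCast_div_natCast]
  rw [Finset.prod_congr rfl (fun α hα => by rw [hfloor α hα]), prodNegOneZpow]
  exact Even.neg_one_zpow hsumq
end

section
/- Let d be an odd integer with d ≡ ±1 (mod 4), m'' ≥ 3 an integer, and a an integer with a·d ≡ 1 (mod m''). For α with 1 ≤ α ≤ m''−1 and gcd(α, m'') = 1, let δ be its inverse modulo m'' and set ξ(α) = δ·d·⌊α·a/m''⌋ + δ·(d−1)/2. Then for any such α, ξ(α) ≡ ξ(m'' − α) (mod m''). -/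
lemma floor_div_int' (n m : ℤ) (hm : 0 < m) : ⌊((n:ℚ))/(m:ℚ)⌋ = n / m := by
  lift m to ℕ using hm.le
  exact_mod_cast Rat.floor_intCast_div_natCast n m

/-- With ξ(α) = δ·d·⌊αa/m''⌋ + δ·(d−1)/2 (where αδ ≡ 1 and the inverse of m''−α is
    −δ), one has ξ(α) ≡ ξ(m''−α) (mod m''). -/
theorem xi_symmetric (m'' a d e α δ : ℤ) (hm : 3 ≤ m'')
    (hd : d = 2 * e + 1) (had : a * d ≡ 1 [ZMOD m''])
    (hα1 : 1 ≤ α) (hα2 : α ≤ m'' - 1) (hcop : IsCoprime α m'')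
    (hδ : α * δ ≡ 1 [ZMOD m'']) :
    δ * d * ⌊((α * a : ℤ) : ℚ) / (m'' : ℚ)⌋ + δ * e ≡
      (-δ) * d * ⌊(((m'' - α) * a : ℤ) : ℚ) / (m'' : ℚ)⌋ + (-δ) * e [ZMOD m''] := by
  have hm0 : (0:ℤ) < m'' := by linarith
  -- a is coprime to m''
  have hacop : IsCoprime a m'' := by
    obtain ⟨k, hk⟩ := Int.modEq_iff_dvd.mp had
    exact ⟨d, k, by linarith⟩
  have hndvd : ¬ m'' ∣ α * a := by
    intro h
    have : IsUnit m'' := (hcop.mul_left hacop).isUnit_of_dvd' h dvd_rfl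
    have := Int.isUnit_iff.mp this
    omega
  -- floor identity
  set F : ℤ := ⌊((α * a : ℤ) : ℚ) / (m'' : ℚ)⌋ with hF
  have hFdiv : F = (α * a) / m'' := floor_div_int' _ _ hm0
  have hF2 : ⌊(((m'' - α) * a : ℤ) : ℚ) / (m'' : ℚ)⌋ = a - F - 1 := by
    rw [floor_div_int' _ _ hm0, hFdiv]
    have h1 := Int.mul_ediv_add_emod (α * a) m''
    have h2 : (α * a) % m'' ≠ 0 := fun h => hndvd (Int.dvd_of_emod_eq_zero h)
    have h3 : 0 ≤ (α * a) % m'' := Int.emod_nonneg _ hm0.ne'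
    have h4 : (α * a) % m'' < m'' := Int.emod_lt_of_pos _ hm0
    have key : (m'' - α) * a = (m'' - (α * a) % m'') + (a - (α * a) / m'' - 1) * m'' := by
      linarith [h1]
    rw [key, Int.add_mul_ediv_right _ _ hm0.ne', Int.ediv_eq_zero_of_lt (by omega) (by omega)]
    ring
  rw [hF2, Int.modEq_iff_dvd]
  obtain ⟨k, hk⟩ := Int.modEq_iff_dvd.mp had
  refine ⟨δ * k, ?_⟩
  subst hd
  linear_combination δ * hk
end

section
/- Let N be a positive integer and m a divisor of N. Define F_m = ∑_{k ∣ N/m} μ(k)·e_{km} in the free abelian group on symbols {e_s : s ∣ N}, where μ is the Möbius function. Then for any divisor d of N with d ≠ N: ∑_{m : d ∣ m ∣ N, m ≠ N} F_m = e_d − e_N. -/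
open ArithmeticFunction

/-! Writing `n = N / m` and `φ l = e_{N / l}`, one has `F_m = ∑_{k l = n} μ(k) φ(l)`, and
`d ∣ m` exactly when `n ∣ N / d`. Summing over these `n` is the inverse of the Möbius
transform, which returns `φ (N / d) = e_d`; the term `m = N` is `F_N = e_N`. -/

theorem Nat.sum_filter_dvd_divisors_eq_sum_divisors_div {A : Type*} [AddCommMonoid A]
    {N d : ℕ} (hN : N ≠ 0) (hd : d ∣ N) (f : ℕ → A) :
    ∑ m ∈ N.divisors.filter (d ∣ ·), f m = ∑ n ∈ (N / d).divisors, f (N / n) := by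
  have hd0 : d ≠ 0 := ne_zero_of_dvd_ne_zero hN hd
  refine Finset.sum_nbij' (N / ·) (N / ·) ?_ ?_ ?_ ?_ (fun m hm => ?_)
  · intro m hm
    simp only [Finset.mem_filter, Nat.mem_divisors] at hm ⊢
    exact ⟨Nat.div_dvd_div_left hm.1.1 hm.2, Nat.div_ne_zero_iff_of_dvd hd |>.mpr ⟨hN, hd0⟩⟩
  · intro n hn
    have hn' : n ∣ N / d := Nat.dvd_of_mem_divisors hn
    simp only [Finset.mem_filter, Nat.mem_divisors]
    refine ⟨⟨Nat.div_dvd_of_dvd (hn'.trans (Nat.div_dvd_of_dvd hd)), hN⟩, ?_⟩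
    exact Nat.dvd_div_of_mul_dvd (mul_comm d n ▸ Nat.mul_dvd_of_dvd_div hd hn')
  · intro m hm
    simp only [Finset.mem_filter, Nat.mem_divisors] at hm
    exact Nat.div_div_self hm.1.1 hN
  · intro n hn
    simp only [Nat.mem_divisors] at hn
    exact Nat.div_div_self (hn.1.trans (Nat.div_dvd_of_dvd hd)) hN
  · rw [Nat.div_div_self (Nat.dvd_of_mem_divisors (Finset.mem_of_mem_filter m hm)) hN]

theorem sum_single_moebius_div_eq_sum_divisorsAntidiagonal {N n : ℕ} (hN : N ≠ 0)
    (hn : n ∣ N) :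
    ∑ k ∈ (N / (N / n)).divisors, Finsupp.single (k * (N / n)) (moebius k) =
      ∑ x ∈ n.divisorsAntidiagonal, moebius x.1 • Finsupp.single (N / x.2) (1 : ℤ) := by
  rw [Nat.div_div_self hn hN,
    Nat.sum_divisorsAntidiagonal (fun k l => moebius k • Finsupp.single (N / l) (1 : ℤ))]
  refine Finset.sum_congr rfl fun k hk => ?_
  obtain ⟨⟨l, rfl⟩, -⟩ := Nat.mem_divisors.mp hk
  obtain ⟨c, rfl⟩ := hn
  have hk0 : 0 < k := Nat.pos_of_ne_zero (left_ne_zero_of_mul (left_ne_zero_of_mul hN))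
  have hl0 : 0 < l := Nat.pos_of_ne_zero (right_ne_zero_of_mul (left_ne_zero_of_mul hN))
  rw [Finsupp.smul_single_one, Nat.mul_div_cancel_left _ hk0,
    Nat.mul_div_cancel_left _ (by positivity), mul_comm k l, mul_assoc,
    Nat.mul_div_cancel_left _ hl0]

theorem sum_Fm_eq_single_sub_single_general (N d : ℕ) (hN : 0 < N) (hd : d ∣ N) :
    (∑ m ∈ N.divisors.filter (fun m => d ∣ m ∧ m ≠ N),
        ∑ k ∈ (N / m).divisors, Finsupp.single (k * m) (moebius k)) =
      Finsupp.single d (1 : ℤ) - Finsupp.single N (1 : ℤ) := by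
  have hNmem : N ∈ N.divisors.filter (d ∣ ·) := by simp [hd, hN.ne']
  have moebius_inversion :=
    (sum_eq_iff_sum_smul_moebius_eq (g := fun l => Finsupp.single (N / l) (1 : ℤ))).mpr
      fun _ _ => rfl
  rw [← Finset.filter_filter, Finset.filter_ne', Finset.sum_erase_eq_sub hNmem,
    Nat.sum_filter_dvd_divisors_eq_sum_divisors_div hN.ne' hd]
  rw [Finset.sum_congr rfl fun n hn =>
    sum_single_moebius_div_eq_sum_divisorsAntidiagonal hN.ne'
      ((Nat.dvd_of_mem_divisors hn).trans (Nat.div_dvd_of_dvd hd))]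
  rw [moebius_inversion _ (Nat.div_pos (Nat.le_of_dvd hN hd) (Nat.pos_of_dvd_of_pos hd hN)),
    Nat.div_div_self hd hN.ne', Nat.div_self hN]
  simp

/-- With F_m = ∑_{k ∣ N/m} μ(k)·e_{km} in the free abelian group on symbols e_s,
    for any divisor d of N with d ≠ N one has ∑_{d ∣ m ∣ N, m ≠ N} F_m = e_d − e_N. -/
theorem sum_Fm_eq_single_sub_single (N d : ℕ) (hN : 0 < N) (hd : d ∣ N) (hdN : d ≠ N) :
    (∑ m ∈ N.divisors.filter (fun m => d ∣ m ∧ m ≠ N),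
        ∑ k ∈ (N / m).divisors, Finsupp.single (k * m) (moebius k)) =
      Finsupp.single d (1 : ℤ) - Finsupp.single N (1 : ℤ) :=
  sum_Fm_eq_single_sub_single_general N d hN hd
end
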